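/- Let X be a Banach space and T ∈ L(X). Suppose there exists a closed subspace Y ⊆ X such that T restricted to Y is an isomorphism (bounded below) and d(Y, T(Y)) > 0. Then for every scalar λ, (T − λI) restricted to Y is an isomorphism and d(Y, (T − λI)(Y)) > 0. -/

import Mathlib

/-!
Write `d = d(Y, T(Y))`. For `u ∈ Y` and `w ∈ T(Y)` one has `d ‖u‖ ≤ ‖u - w‖`, and hence, by the
triangle inequality, `d ‖w‖ ≤ (1 + d) ‖u - w‖`. Taking `u = λ y`, `w = T y` shows that `T - λI` is
bounded below on `Y`. For a unit vector `x ∈ Y` and `z ∈ Y`, write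
`x - (T - λI) z = (x + λ z) - T z`: the first estimate gives `‖x - (T - λI) z‖ ≥ d (1 - |λ| ‖z‖)`,
the second one bounds `‖z‖` by a multiple of `‖x - (T - λI) z‖`, and eliminating `‖z‖` gives a
positive lower bound for `d(Y, (T - λI)(Y))`.
-/

/-- The distance `d(X,Y) = inf {‖x - y‖ : x ∈ S_X, y ∈ Y}` between subspaces. -/
noncomputable def subspaceDist {Z : Type*} [NormedAddCommGroup Z] [NormedSpace ℂ Z]
    (X Y : Submodule ℂ Z) : ℝ :=
  sInf {r : ℝ | ∃ x ∈ X, ‖x‖ = 1 ∧ ∃ y ∈ Y, r = ‖x - y‖}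

section subspaceDist

variable {X : Type*} [NormedAddCommGroup X] [NormedSpace ℂ X] {Y W : Submodule ℂ X}

theorem subspaceDist_nonneg (Y W : Submodule ℂ X) : 0 ≤ subspaceDist Y W :=
  Real.sInf_nonneg <| by
    rintro r ⟨x, -, -, w, -, rfl⟩
    exact norm_nonneg _

theorem subspaceDist_mul_norm_le_norm_sub {u w : X} (hu : u ∈ Y) (hw : w ∈ W) :
    subspaceDist Y W * ‖u‖ ≤ ‖u - w‖ := by
  rcases eq_or_ne u 0 with rfl | hu0
  · simp
  have hnu : 0 < ‖u‖ := norm_pos_iff.mpr hu0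
  have hmem : ‖u - w‖ / ‖u‖ ∈ {r : ℝ | ∃ x ∈ Y, ‖x‖ = 1 ∧ ∃ y ∈ W, r = ‖x - y‖} := by
    refine ⟨(‖u‖⁻¹ : ℂ) • u, Y.smul_mem _ hu, norm_smul_inv_norm hu0,
      (‖u‖⁻¹ : ℂ) • w, W.smul_mem _ hw, ?_⟩
    rw [← smul_sub, norm_smul]
    simp [div_eq_inv_mul]
  have hbdd : BddBelow {r : ℝ | ∃ x ∈ Y, ‖x‖ = 1 ∧ ∃ y ∈ W, r = ‖x - y‖} := by
    refine ⟨0, ?_⟩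
    rintro r ⟨x, -, -, y, -, rfl⟩
    exact norm_nonneg _
  rw [← le_div_iff₀ hnu]
  exact csInf_le hbdd hmem

theorem subspaceDist_mul_norm_le_one_add_mul_norm_sub {u w : X} (hu : u ∈ Y) (hw : w ∈ W) :
    subspaceDist Y W * ‖w‖ ≤ (1 + subspaceDist Y W) * ‖u - w‖ := by
  have hu_le := subspaceDist_mul_norm_le_norm_sub hu hw
  have hw_le : ‖w‖ ≤ ‖u‖ + ‖u - w‖ := by
    simpa using norm_sub_le u (u - w)
  nlinarith [subspaceDist_nonneg Y W]

theorem ne_bot_of_subspaceDist_pos (h : 0 < subspaceDist Y W) : Y ≠ ⊥ := by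
  rintro rfl
  have hempty : {r : ℝ | ∃ x ∈ (⊥ : Submodule ℂ X), ‖x‖ = 1 ∧ ∃ y ∈ W, r = ‖x - y‖} = ∅ := by
    ext r
    simp
  exact h.ne' (by rw [subspaceDist, hempty, Real.sInf_empty])

theorem le_subspaceDist (hY : Y ≠ ⊥) {δ : ℝ}
    (h : ∀ x ∈ Y, ‖x‖ = 1 → ∀ w ∈ W, δ ≤ ‖x - w‖) : δ ≤ subspaceDist Y W := by
  obtain ⟨x, hx, hx0⟩ := Submodule.exists_mem_ne_zero_of_ne_bot hY
  refine le_csInf ⟨_, (‖x‖⁻¹ : ℂ) • x, Y.smul_mem _ hx, norm_smul_inv_norm hx0, 0, W.zero_mem, rfl⟩ ?_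
  rintro r ⟨x, hx, hx1, w, hw, rfl⟩
  exact h x hx hx1 w hw

end subspaceDist

section translate

variable {X : Type*} [NormedAddCommGroup X] [NormedSpace ℂ X] {Y : Submodule ℂ X}
  {T : X →ₗ[ℂ] X} {c : ℝ}

theorem mul_subspaceDist_div_mul_norm_le_norm_sub_smul (hT : ∀ y ∈ Y, c * ‖y‖ ≤ ‖T y‖)
    (lam : ℂ) {y : X} (hy : y ∈ Y) :
    c * subspaceDist Y (Y.map T) / (1 + subspaceDist Y (Y.map T)) * ‖y‖ ≤ ‖T y - lam • y‖ := by
  set d := subspaceDist Y (Y.map T)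
  have hd := subspaceDist_nonneg Y (Y.map T)
  have hTy : d * ‖T y‖ ≤ (1 + d) * ‖lam • y - T y‖ :=
    subspaceDist_mul_norm_le_one_add_mul_norm_sub (Y.smul_mem lam hy) ⟨y, hy, rfl⟩
  rw [div_mul_eq_mul_div, div_le_iff₀ (by positivity), norm_sub_rev]
  nlinarith [mul_le_mul_of_nonneg_left (hT y hy) hd]

theorem mul_subspaceDist_le_mul_norm_sub_map_sub_smul (hc : 0 ≤ c)
    (hT : ∀ y ∈ Y, c * ‖y‖ ≤ ‖T y‖) (lam : ℂ) {x z : X} (hx : x ∈ Y) (hx1 : ‖x‖ = 1)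
    (hz : z ∈ Y) :
    c * subspaceDist Y (Y.map T) ≤
      (c + ‖lam‖ * (1 + subspaceDist Y (Y.map T))) * ‖x - (T z - lam • z)‖ := by
  set d := subspaceDist Y (Y.map T)
  have hd := subspaceDist_nonneg Y (Y.map T)
  have hrw : x - (T z - lam • z) = (x + lam • z) - T z := by abel
  rw [hrw]
  set e := ‖(x + lam • z) - T z‖
  have hu : x + lam • z ∈ Y := Y.add_mem hx (Y.smul_mem lam hz)
  have hTz : T z ∈ Y.map T := ⟨z, hz, rfl⟩
  have h_near : d * ‖x + lam • z‖ ≤ e := subspaceDist_mul_norm_le_norm_sub hu hTz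
  have h_far : d * ‖T z‖ ≤ (1 + d) * e := subspaceDist_mul_norm_le_one_add_mul_norm_sub hu hTz
  have hx_le : 1 ≤ ‖x + lam • z‖ + ‖lam‖ * ‖z‖ := by
    simpa [hx1, norm_smul] using norm_sub_le (x + lam • z) (lam • z)
  have hz_le : c * d * ‖z‖ ≤ (1 + d) * e := by
    nlinarith [mul_le_mul_of_nonneg_left (hT z hz) hd]
  nlinarith [mul_le_mul_of_nonneg_left hx_le (mul_nonneg hc hd),
    mul_le_mul_of_nonneg_left h_near hc, mul_le_mul_of_nonneg_left hz_le (norm_nonneg lam)]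

theorem div_le_subspaceDist_map_sub_smul (hc : 0 < c) (hT : ∀ y ∈ Y, c * ‖y‖ ≤ ‖T y‖)
    (hY : Y ≠ ⊥) (lam : ℂ) :
    c * subspaceDist Y (Y.map T) / (c + ‖lam‖ * (1 + subspaceDist Y (Y.map T))) ≤
      subspaceDist Y (Y.map (T - lam • LinearMap.id)) := by
  have hd := subspaceDist_nonneg Y (Y.map T)
  refine le_subspaceDist hY fun x hx hx1 w ⟨z, hz, hw⟩ => ?_
  rw [← hw, div_le_iff₀' (by positivity)]
  simpa using mul_subspaceDist_le_mul_norm_sub_map_sub_smul hc.le hT lam hx hx1 hz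

end translate

theorem translate_isomorphism_dist_pos_general {X : Type*} [NormedAddCommGroup X] [NormedSpace ℂ X]
    (T : X →L[ℂ] X) (Y : Submodule ℂ X)
    (hiso : ∃ c > 0, ∀ y ∈ Y, c * ‖y‖ ≤ ‖T y‖)
    (hdist : 0 < subspaceDist Y (Y.map (T : X →ₗ[ℂ] X))) :
    ∀ lam : ℂ, (∃ c > 0, ∀ y ∈ Y, c * ‖y‖ ≤ ‖(T - lam • ContinuousLinearMap.id ℂ X) y‖) ∧
      0 < subspaceDist Y (Y.map ((T - lam • ContinuousLinearMap.id ℂ X : X →L[ℂ] X) : X →ₗ[ℂ] X)) := by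
  obtain ⟨c, hc, hT⟩ := hiso
  set d := subspaceDist Y (Y.map (T : X →ₗ[ℂ] X))
  intro lam
  refine ⟨⟨c * d / (1 + d), by positivity, fun y hy => ?_⟩, ?_⟩
  · simpa using mul_subspaceDist_div_mul_norm_le_norm_sub_smul hT lam hy
  · exact (by positivity : (0 : ℝ) < _).trans_le <|
      div_le_subspaceDist_map_sub_smul hc hT (ne_bot_of_subspaceDist_pos hdist) lam

/-- If `T` is bounded below on `Y` and `d(Y, T(Y)) > 0`, then for every `λ ∈ ℂ` the operator
`T - λI` is bounded below on `Y` and `d(Y, (T - λI)(Y)) > 0`. -/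
theorem translate_isomorphism_dist_pos {X : Type*} [NormedAddCommGroup X] [NormedSpace ℂ X]
    [CompleteSpace X] (T : X →L[ℂ] X) (Y : Submodule ℂ X) (hY : IsClosed (Y : Set X))
    (hiso : ∃ c > 0, ∀ y ∈ Y, c * ‖y‖ ≤ ‖T y‖)
    (hdist : 0 < subspaceDist Y (Y.map (T : X →ₗ[ℂ] X))) :
    ∀ lam : ℂ, (∃ c > 0, ∀ y ∈ Y, c * ‖y‖ ≤ ‖(T - lam • ContinuousLinearMap.id ℂ X) y‖) ∧
      0 < subspaceDist Y (Y.map ((T - lam • ContinuousLinearMap.id ℂ X : X →L[ℂ] X) : X →ₗ[ℂ] X)) :=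
  translate_isomorphism_dist_pos_general T Y hiso hdist
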